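/- The system C is sound for classical propositional semantics: if A is derivable in C from assumptions Γ, then every Boolean valuation that makes all formulas in Γ true makes A true. -/
import Mathlib

/- Milne's system **C** of classical propositional logic with general
introduction and general elimination rules, including Tarski's Rule. -/
inductive Formula : Type
  | atom : ℕ → Formula
  | neg  : Formula → Formula
  | conj : Formula → Formula → Formula
  | disj : Formula → Formula → Formula
  | imp  : Formula → Formula → Formula
  deriving DecidableEq

/-- Derivability `Γ ⊢_C A` in the system **C**.  Discharge of an assumption is
rendered by `insert`ing it into the context of the corresponding premise. -/
inductive Deriv : Set Formula → Formula → Prop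
  | ass {Γ A} : A ∈ Γ → Deriv Γ A
  | andI {Γ A B C} : Deriv Γ A → Deriv Γ B →
      Deriv (insert (Formula.conj A B) Γ) C → Deriv Γ C
  | andE {Γ A B C} : Deriv Γ (Formula.conj A B) →
      Deriv (insert A (insert B Γ)) C → Deriv Γ C
  | orI₁ {Γ A B C} : Deriv Γ A →
      Deriv (insert (Formula.disj A B) Γ) C → Deriv Γ C
  | orI₂ {Γ A B C} : Deriv Γ B →
      Deriv (insert (Formula.disj A B) Γ) C → Deriv Γ C
  | orE {Γ A B C} : Deriv Γ (Formula.disj A B) →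
      Deriv (insert A Γ) C → Deriv (insert B Γ) C → Deriv Γ C
  | impI {Γ A B C} : Deriv Γ B →
      Deriv (insert (Formula.imp A B) Γ) C → Deriv Γ C
  | tr {Γ A B C} : Deriv (insert A Γ) C →
      Deriv (insert (Formula.imp A B) Γ) C → Deriv Γ C
  | impE {Γ A B C} : Deriv Γ (Formula.imp A B) → Deriv Γ A →
      Deriv (insert B Γ) C → Deriv Γ C
  | negI {Γ A C} : Deriv (insert A Γ) C →
      Deriv (insert (Formula.neg A) Γ) C → Deriv Γ C
  | negE {Γ A C} : Deriv Γ (Formula.neg A) → Deriv Γ A → Deriv Γ C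
/-- The value of a formula under a Boolean valuation of the atoms, by the
classical truth tables for ¬, ∧, ∨, ⊃. -/
def Formula.eval (v : ℕ → Bool) : Formula → Bool
  | .atom n => v n
  | .neg A => !(A.eval v)
  | .conj A B => A.eval v && B.eval v
  | .disj A B => A.eval v || B.eval v
  | .imp A B => !(A.eval v) || B.eval v

/-- Soundness of the system C for classical propositional
semantics: if `A` is derivable in C from `Γ`, then every Boolean valuation
making all formulas of `Γ` true makes `A` true. -/
theorem soundness (Γ : Set Formula) (A : Formula) (h : Deriv Γ A) :
    ∀ v : ℕ → Bool, (∀ B ∈ Γ, B.eval v = true) → A.eval v = true := by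
  induction h with
  | ass h => exact fun v hv => hv _ h
  | andI hA hB hC ihA ihB ihC =>
      intro v hv
      refine ihC v ?_
      intro B hB'
      rcases hB' with rfl | hB'
      · simp [Formula.eval, ihA v hv, ihB v hv]
      · exact hv _ hB'
  | andE hAB hC ihAB ihC =>
      intro v hv
      have := ihAB v hv
      simp [Formula.eval] at this
      refine ihC v ?_
      intro B hB'
      rcases hB' with rfl | hB'
      · exact this.1
      · rcases hB' with rfl | hB'
        · exact this.2
        · exact hv _ hB'
  | orI₁ hA hC ihA ihC =>
      intro v hv
      refine ihC v ?_
      intro B hB'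
      rcases hB' with rfl | hB'
      · simp [Formula.eval, ihA v hv]
      · exact hv _ hB'
  | orI₂ hA hC ihA ihC =>
      intro v hv
      refine ihC v ?_
      intro B hB'
      rcases hB' with rfl | hB'
      · simp [Formula.eval, ihA v hv]
      · exact hv _ hB'
  | orE hAB h1 h2 ihAB ih1 ih2 =>
      intro v hv
      have := ihAB v hv
      simp [Formula.eval] at this
      rcases this with h | h
      · exact ih1 v (fun B hB' => by rcases hB' with rfl | hB'; exact h; exact hv _ hB')
      · exact ih2 v (fun B hB' => by rcases hB' with rfl | hB'; exact h; exact hv _ hB')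
  | impI hB hC ihB ihC =>
      intro v hv
      refine ihC v ?_
      intro B hB'
      rcases hB' with rfl | hB'
      · simp [Formula.eval, ihB v hv]
      · exact hv _ hB'
  | @tr Γ' A' B' C' h1 h2 ih1 ih2 =>
      intro v hv
      by_cases hA : A'.eval v = true
      · exact ih1 v (fun B hB' => by rcases hB' with rfl | hB'; exact hA; exact hv _ hB')
      · refine ih2 v (fun B hB' => ?_)
        rcases hB' with rfl | hB'
        · simp [Formula.eval]; left; simpa using hA
        · exact hv _ hB'
  | impE hAB hA hC ihAB ihA ihC =>
      intro v hv
      have h1 := ihAB v hv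
      have h2 := ihA v hv
      simp [Formula.eval, h2] at h1
      exact ihC v (fun B hB' => by rcases hB' with rfl | hB'; exact h1; exact hv _ hB')
  | @negI Γ' A' C' h1 h2 ih1 ih2 =>
      intro v hv
      by_cases hA : A'.eval v = true
      · exact ih1 v (fun B hB' => by rcases hB' with rfl | hB'; exact hA; exact hv _ hB')
      · refine ih2 v (fun B hB' => ?_)
        rcases hB' with rfl | hB'
        · simp [Formula.eval]; simpa using hA
        · exact hv _ hB'
  | negE hn hA ihn ihA =>
      intro v hv
      have h1 := ihn v hv
      have h2 := ihA v hv
      simp [Formula.eval, h2] at h1
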